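/- arXiv:2210.10588 — 2 statements merged into one kernel-verified Lean document; each statement's English description precedes it below -/
import Mathlib

section
/- Let f : ℂ → ℝ be C¹ and let G_k be the cumulant polynomial built from f. Then for k ≥ 3, every z_0 ∈ ℂ and each coordinate direction j ∈ {1,2}, the sum over r = 1,…,k of the partial derivative ∂G_k/∂z_r^{(j)} evaluated at the diagonal point (z_0,…,z_0) is zero. -/
/-!
On the diagonal every term of `G_k` is `f(z)^k`, so `G_k(z,…,z) = f(z)^k` times the sum of the
coefficients, which is `k!` times the coefficient of `x^k` in `log (1 + (e^x - 1)) = x`: by the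
composition formula for power series this sum vanishes for `k ≥ 2`. Hence `G_k` vanishes identically
on the diagonal, and the sum of the partial derivatives at a diagonal point is the derivative along
the diagonal direction, i.e. the derivative of `z ↦ G_k(z,…,z) = 0`.
-/

open scoped BigOperators

/-- The cumulant polynomial
`G_k(z_1,…,z_k) = Σ_{j=1}^k ((-1)^{j-1}/j) Σ_{k_1+⋯+k_j=k, k_i≥1}
  (k!/(k_1!⋯k_j!)) Π_{l=1}^j f(z_l)^{k_l}`,
realized as a sum over `Composition k` (with `c.length` playing the role of `j`). -/
noncomputable def cumulantG (f : ℂ → ℝ) (k : ℕ) (z : Fin k → ℂ) : ℝ :=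
  ∑ c : Composition k,
    ((-1 : ℝ) ^ (c.length - 1) / (c.length : ℝ)) *
      ((Nat.factorial k : ℝ) /
        ∏ i : Fin c.length, (Nat.factorial (c.blocksFun i) : ℝ)) *
      ∏ i : Fin c.length, f (z (Fin.castLE c.length_le i)) ^ (c.blocksFun i)

/-- The unit vector of `ℂ^k ≅ (ℝ²)^k` pointing in the `j`-th real coordinate direction
(`j = 0`: real part, `j = 1`: imaginary part) of the `r`-th variable.  Differentiating
along `coordDir k r j` is the partial derivative `∂_{r j}` with respect to the `j`-th
real coordinate of the `r`-th complex variable. -/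
noncomputable def coordDir (k : ℕ) (r : Fin k) (j : Fin 2) : Fin k → ℂ :=
  Pi.single r (if j = 0 then (1 : ℂ) else Complex.I)

open FormalMultilinearSeries in
theorem sum_composition_log_exp_coeff_eq_zero {n : ℕ} (hn : 2 ≤ n) :
    ∑ c : Composition n,
      (-1 : ℝ) ^ (c.length - 1) / c.length / ∏ i, ((c.blocksFun i).factorial : ℝ) = 0 := by
  have hlog : HasFPowerSeriesAt Real.log (ofScalars ℝ fun n => -(-1 : ℝ) ^ n / n)
      (NormedSpace.exp (0 : ℝ)) := by
    rw [NormedSpace.exp_zero]; exact hasFPowerSeriesAt_log_one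
  have hid : Real.log ∘ NormedSpace.exp = ContinuousLinearMap.id ℝ ℝ := by
    ext x; simp [← Real.exp_eq_exp_ℝ]
  have hser := (hid ▸ hlog.comp NormedSpace.exp_hasFPowerSeriesAt_zero).eq_formalMultilinearSeries
    ((ContinuousLinearMap.id ℝ ℝ).hasFPowerSeriesAt 0)
  obtain ⟨m, rfl⟩ : ∃ m, n = m + 2 := ⟨n - 2, by omega⟩
  have hcoeff := congrArg (fun p : FormalMultilinearSeries ℝ ℝ ℝ => p (m + 2) (fun _ => 1)) hser
  simp only [FormalMultilinearSeries.comp, NormedSpace.expSeries_eq_ofScalars, sum_apply, compAlongComposition_apply, apply_eq_prod_smul_coeff, applyComposition,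
    Function.comp_apply, Finset.prod_const_one, coeff_ofScalars, smul_eq_mul, one_mul,
    Finset.prod_inv_distrib, ContinuousLinearMap.fpowerSeries_apply_add_two,
    _root_.zero_apply] at hcoeff
  rw [← hcoeff]
  refine Finset.sum_congr rfl fun c _ => ?_
  have hlen : c.length - 1 + 1 = c.length := Nat.sub_add_cancel (c.length_pos_of_pos (by omega))
  rw [show (-1 : ℝ) ^ c.length = -(-1) ^ (c.length - 1) by nth_rw 1 [← hlen]; ring]
  ring

theorem sum_fderiv_pi_single_diag {𝕜 ι E G : Type*} [NontriviallyNormedField 𝕜] [Fintype ι]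
    [DecidableEq ι] [NormedAddCommGroup E] [NormedSpace 𝕜 E] [NormedAddCommGroup G]
    [NormedSpace 𝕜 G] {F : (ι → E) → G} {x : E} (hF : DifferentiableAt 𝕜 F fun _ => x) (v : E) :
    ∑ r, fderiv 𝕜 F (fun _ => x) (Pi.single r v) = fderiv 𝕜 (fun y => F fun _ => y) x v := by
  let diag : E →L[𝕜] ι → E := ContinuousLinearMap.pi fun _ => ContinuousLinearMap.id 𝕜 E
  have hchain : fderiv 𝕜 (F ∘ diag) x = (fderiv 𝕜 F (diag x)).comp diag :=
    (hF.hasFDerivAt.comp x diag.hasFDerivAt).fderiv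
  rw [← map_sum, Finset.univ_sum_single]
  exact (DFunLike.congr_fun hchain v).symm

theorem differentiable_cumulantG {f : ℂ → ℝ} (hf : Differentiable ℝ f) (k : ℕ) :
    Differentiable ℝ (cumulantG f k) := by
  unfold cumulantG
  fun_prop

theorem cumulantG_const_eq_zero (f : ℂ → ℝ) {k : ℕ} (hk : 2 ≤ k) (z : ℂ) :
    cumulantG f k (fun _ => z) = 0 := by
  simp only [cumulantG, Finset.prod_pow_eq_pow_sum, Composition.sum_blocksFun]
  rw [← Finset.sum_mul, ← mul_zero ((k.factorial : ℝ) * f z ^ k),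
    ← sum_composition_log_exp_coeff_eq_zero hk, Finset.mul_sum, Finset.sum_mul]
  refine Finset.sum_congr rfl fun c _ => ?_
  ring

/-- for `f` of class `C¹`, `k ≥ 3`, every `z_0 ∈ ℂ` and each real coordinate
direction `j`, `Σ_{r=1}^k (∂_{r j} G_k)(z_0,…,z_0) = 0`. -/
theorem cumulantG_diag_first_deriv_sum (f : ℂ → ℝ) (hf : ContDiff ℝ 1 f)
    (k : ℕ) (hk : 3 ≤ k) (z0 : ℂ) (j : Fin 2) :
    ∑ r : Fin k,
      fderiv ℝ (cumulantG f k) (fun _ => z0) (coordDir k r j) = 0 := by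
  have hG := differentiable_cumulantG (hf.differentiable one_ne_zero) k
  have hdiag : (fun z : ℂ => cumulantG f k fun _ => z) = fun _ => 0 :=
    funext (cumulantG_const_eq_zero f (by omega))
  simp only [coordDir]
  rw [sum_fderiv_pi_single_diag (hG _), hdiag, fderiv_fun_const, Pi.zero_apply, zero_apply]
end

section
/- Let f : ℂ → ℝ be C² and G_k the cumulant polynomial built from f. For k ≥ 3, z_0 ∈ ℂ and any m, l ∈ {1,2}: Σ_{r=1}^k (∂_{rm}∂_{rl} G_k)(z_0,…,z_0) = 0, where ∂_{rm} denotes the partial derivative in the m-th real coordinate of the r-th variable. -/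
/-!
Moving only the `r`-th variable away from the diagonal point `(z₀,…,z₀)`, `G_k` becomes `p_r ∘ f`
for a polynomial `p_r` (only the `r`-th block of a composition sees that variable), so by the chain
rule `∂_{rm}∂_{rl} G_k = p_r''(f) ∂_m f ∂_l f + p_r'(f) ∂_m∂_l f`. Summed over `r`, the `j`-th
derivative contributes `f^{k-j} Σ_c coeff(c) Σ_i (b_i)_j`, with `(b)_j` the falling factorial.
Rotating the blocks of each composition absorbs the factor `1/length`, and splitting off the first
block, with `Σ_{c ⊨ m} (-1)^{length c} / ∏ b_i! = (-1)^m / m!` (that is, `1/(1 + (eˣ - 1)) = e⁻ˣ`),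
turns `Σ_c coeff(c) Σ_i ψ(b_i)` into the `k`-th finite difference `Σ_n (-1)^{k-n} C(k,n) ψ(n)`.
This vanishes for `ψ = (·)_j`, a polynomial of degree `j ∈ {1, 2}`, as `k ≥ 3`.
-/

open scoped BigOperators

open Finset Polynomial
open scoped Nat

theorem List.headI_rotate {α : Type*} [Inhabited α] {L : List α} {i : ℕ} (h : i < L.length) :
    (L.rotate i).headI = L[i] := by
  have := List.head?_rotate h
  cases hL : L.rotate i <;> simp_all

theorem List.sum_fin_getD_of_length_le {M : Type*} [AddCommMonoid M] {L : List ℕ} {k : ℕ}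
    (hL : L.length ≤ k) {ψ : ℕ → M} (hψ : ψ 0 = 0) :
    ∑ r : Fin k, ψ (L.getD r 0) = (L.map ψ).sum := by
  rw [Fin.sum_univ_eq_sum_range (fun r => ψ (L.getD r 0)),
    ← sum_subset (range_subset_range.2 hL) fun r _ hr => by
      rw [L.getD_eq_default _ (by simpa using hr), hψ],
    ← Fin.sum_univ_eq_sum_range (fun r => ψ (L.getD r 0)), ← Fin.sum_univ_fun_getElem]
  exact sum_congr rfl fun i _ => by rw [L.getD_eq_getElem _ i.isLt]

namespace Composition

variable {k : ℕ}

def rotate (c : Composition k) (n : ℕ) : Composition k where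
  blocks := c.blocks.rotate n
  blocks_pos hi := c.blocks_pos (List.mem_rotate.1 hi)
  blocks_sum := by rw [(c.blocks.rotate_perm n).sum_eq, c.blocks_sum]

theorem sum_sum_rotate {M : Type*} [AddCommMonoid M] (F : List ℕ → M) :
    ∑ c : Composition k, ∑ i : Fin c.length, F (c.blocks.rotate i)
      = ∑ c : Composition k, c.length • F c.blocks := by
  let e : (Σ c : Composition k, Fin c.length) → Σ c : Composition k, Fin c.length :=
    fun x => ⟨x.1.rotate x.2, Fin.cast (List.length_rotate _ _).symm x.2⟩
  have he : Function.Injective e := by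
    rintro ⟨c, i⟩ ⟨c', i'⟩ h
    have hi : (i : ℕ) = i' := congrArg (fun x => (x.2 : ℕ)) h
    have hb : c.blocks.rotate i = c'.blocks.rotate i := by
      simpa [e, rotate, hi] using congrArg (fun x => x.1.blocks) h
    obtain rfl : c = c' := Composition.ext (List.rotate_injective _ hb)
    obtain rfl : i = i' := Fin.ext hi
    rfl
  simp_rw [← Fin.sum_const,
    ← Fintype.sum_sigma' (fun (c : Composition k) (i : Fin c.length) => F (c.blocks.rotate i)),
    ← Fintype.sum_sigma' (fun (c : Composition k) (_ : Fin c.length) => F c.blocks)]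
  exact Fintype.sum_bijective e (Finite.injective_iff_bijective.1 he) _ _ fun _ => rfl

def tail (c : Composition k) : Composition (k - c.blocks.headI) where
  blocks := c.blocks.tail
  blocks_pos hi := c.blocks_pos (List.mem_of_mem_tail hi)
  blocks_sum := by
    obtain ⟨_ | ⟨n, L⟩, -, rfl⟩ := c <;> simp

def cons {n : ℕ} (c : Composition (k - n)) (hn : 0 < n) (hnk : n ≤ k) : Composition k where
  blocks := n :: c.blocks
  blocks_pos hi := (List.mem_cons.1 hi).elim (· ▸ hn) c.blocks_pos
  blocks_sum := by rw [List.sum_cons, c.blocks_sum]; omega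

theorem headI_cons_tail_blocks (hk : 0 < k) (c : Composition k) :
    c.blocks.headI :: c.tail.blocks = c.blocks :=
  List.cons_head!_tail (List.ne_nil_of_length_pos (c.length_pos_of_pos hk))

theorem sum_eq_sum_Icc_sum_cons {M : Type*} [AddCommMonoid M] (hk : 0 < k)
    (F : List ℕ → M) :
    ∑ c : Composition k, F c.blocks
      = ∑ n ∈ Icc 1 k, ∑ c : Composition (k - n), F (n :: c.blocks) := by
  rw [Finset.sum_sigma']
  refine Finset.sum_bij' (fun c _ => ⟨c.blocks.headI, c.tail⟩)
    (fun x hx => cons x.2 (mem_Icc.1 (mem_sigma.1 hx).1).1 (mem_Icc.1 (mem_sigma.1 hx).1).2)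
    (fun c _ => ?_) (fun _ _ => mem_univ _) (fun c _ => ?_) (fun _ _ => rfl) (fun c _ => ?_)
  · have hmem : c.blocks.headI ∈ c.blocks := by
      rw [← headI_cons_tail_blocks hk c]; exact List.mem_cons_self
    simpa using ⟨c.one_le_blocks hmem, c.blocks_le hmem⟩
  · exact Composition.ext (headI_cons_tail_blocks hk c)
  · exact congrArg F (headI_cons_tail_blocks hk c).symm

theorem getD_blocks_le (c : Composition k) (r : ℕ) : c.blocks.getD r 0 ≤ k := by
  rcases lt_or_ge r c.blocks.length with h | h
  · rw [List.getD_eq_getElem _ _ h]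
    exact c.blocks_le (List.getElem_mem h)
  · rw [List.getD_eq_default _ _ h]
    exact k.zero_le

theorem prod_update_castLE_pow {M : Type*} [CommMonoid M]
    (c : Composition k) (r : Fin k) (a y : M) :
    ∏ i : Fin c.length, Function.update (fun _ => a) r y (Fin.castLE c.length_le i) ^ c.blocksFun i
      = y ^ c.blocks.getD r 0 * a ^ (k - c.blocks.getD r 0) := by
  by_cases h : (r : ℕ) < c.length
  · set i0 : Fin c.length := ⟨r, h⟩
    have hsum : ∑ i ∈ {i0}ᶜ, c.blocksFun i = k - c.blocksFun i0 := by
      have := Fintype.sum_eq_add_sum_compl i0 c.blocksFun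
      rw [c.sum_blocksFun] at this
      omega
    have hrest : ∀ i ∈ ({i0}ᶜ : Finset _),
        Function.update (fun _ => a) r y (Fin.castLE c.length_le i) ^ c.blocksFun i
          = a ^ c.blocksFun i := fun i hi => by
      rw [Function.update_of_ne]
      simpa [Fin.ext_iff, i0] using hi
    rw [Fintype.prod_eq_mul_prod_compl i0, prod_congr rfl hrest, prod_pow_eq_pow_sum, hsum,
      List.getD_eq_getElem _ _ h]
    have : Fin.castLE c.length_le i0 = r := Fin.ext rfl
    simp [this, blocksFun, i0]
  · have hrest : ∀ i : Fin c.length,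
        Function.update (fun _ => a) r y (Fin.castLE c.length_le i) ^ c.blocksFun i
          = a ^ c.blocksFun i := fun i => by
      rw [Function.update_of_ne]
      intro hi
      exact h (hi ▸ i.isLt)
    rw [prod_congr rfl fun i _ => hrest i, prod_pow_eq_pow_sum, c.sum_blocksFun,
      List.getD_eq_default _ _ (not_lt.1 h)]
    simp

end Composition

theorem sum_range_succ_eq_add_sum_Icc {M : Type*} [AddCommMonoid M] (k : ℕ) (g : ℕ → M) :
    ∑ n ∈ range (k + 1), g n = g 0 + ∑ n ∈ Icc 1 k, g n := by
  rw [range_eq_Ico, sum_eq_sum_Ico_succ_bot k.succ_pos]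
  rfl

theorem sum_range_neg_one_pow_mul_choose_mul_eval {R : Type*} [CommRing R] {k : ℕ} {P : R[X]}
    (hP : P.natDegree < k) :
    ∑ n ∈ range (k + 1), (-1) ^ (k - n) * (k.choose n : R) * P.eval (n : R) = 0 := by
  have := congrFun (Polynomial.fwdDiff_iter_eq_zero_of_degree_lt hP) 0
  rw [fwdDiff_iter_eq_sum_shift] at this
  simpa [zsmul_eq_mul] using this

theorem descFactorial_mul_pow_mul_pow {R : Type*} [CommSemiring R] {b k : ℕ} (hb : b ≤ k)
    (j : ℕ) (a : R) :
    (b.descFactorial j : R) * a ^ (b - j) * a ^ (k - b) = b.descFactorial j * a ^ (k - j) := by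
  rcases le_or_gt j b with hj | hj
  · rw [mul_assoc, ← pow_add]
    congr 2
    omega
  · simp [Nat.descFactorial_of_lt hj]

noncomputable def blocksWeight (L : List ℕ) : ℝ :=
  (-1) ^ L.length / (L.map fun n => (n ! : ℝ)).prod

theorem blocksWeight_cons (n : ℕ) (L : List ℕ) :
    blocksWeight (n :: L) = -(blocksWeight L / n !) := by
  simp only [blocksWeight, List.length_cons, List.map_cons, List.prod_cons]
  ring

theorem blocksWeight_rotate (L : List ℕ) (i : ℕ) : blocksWeight (L.rotate i) = blocksWeight L := by
  rw [blocksWeight, blocksWeight, List.length_rotate, List.map_rotate,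
    (List.rotate_perm _ i).prod_eq]

theorem sum_blocksWeight (m : ℕ) :
    ∑ c : Composition m, blocksWeight c.blocks = (-1) ^ m / m ! := by
  induction m using Nat.strong_induction_on with
  | _ m ih =>
  rcases m.eq_zero_or_pos with rfl | hm
  · have hnil (c : Composition 0) : c.blocks = [] := c.blocks_eq_nil.2 rfl
    simp [blocksWeight, hnil, composition_card]
  have halt : ∑ n ∈ Icc 1 m, (-1 : ℝ) ^ (m - n) * m.choose n = -(-1) ^ m := by
    have := sum_range_neg_one_pow_mul_choose_mul_eval (P := (1 : ℝ[X])) (by simpa using hm)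
    rw [sum_range_succ_eq_add_sum_Icc] at this
    simpa [add_eq_zero_iff_eq_neg'] using this
  calc ∑ c : Composition m, blocksWeight c.blocks
      = ∑ n ∈ Icc 1 m, -((-1) ^ (m - n) / ((m - n)! : ℝ) / n !) := by
        rw [Composition.sum_eq_sum_Icc_sum_cons hm]
        refine sum_congr rfl fun n hn => ?_
        simp_rw [blocksWeight_cons, sum_neg_distrib, ← sum_div]
        rw [ih _ (by grind)]
    _ = -(∑ n ∈ Icc 1 m, (-1) ^ (m - n) * (m.choose n : ℝ)) / m ! := by
        rw [neg_div, sum_div, ← sum_neg_distrib]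
        refine sum_congr rfl fun n hn => ?_
        rw [Nat.cast_choose ℝ (mem_Icc.1 hn).2]
        field_simp
    _ = (-1) ^ m / m ! := by rw [halt, neg_neg]

noncomputable def cumulantCoeff {k : ℕ} (c : Composition k) : ℝ :=
  ((-1 : ℝ) ^ (c.length - 1) / (c.length : ℝ)) *
    ((k ! : ℝ) / ∏ i : Fin c.length, ((c.blocksFun i)! : ℝ))

theorem cumulantCoeff_eq {k : ℕ} (hk : 0 < k) (c : Composition k) :
    cumulantCoeff c = -(k ! * blocksWeight c.blocks) / c.length := by
  obtain ⟨j, hj⟩ := Nat.exists_eq_add_one.2 (c.length_pos_of_pos hk)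
  have hprod :
      ∏ i : Fin c.length, ((c.blocksFun i)! : ℝ) = (c.blocks.map fun n => (n ! : ℝ)).prod :=
    Fin.prod_univ_fun_getElem c.blocks fun n => (n ! : ℝ)
  rw [cumulantCoeff, blocksWeight, hprod, Composition.blocks_length, hj]
  simp only [Nat.add_sub_cancel, pow_succ]
  ring

theorem sum_cumulantCoeff_mul_sum_map {k : ℕ} (hk : 0 < k) (ψ : ℕ → ℝ) :
    ∑ c : Composition k, cumulantCoeff c * (c.blocks.map ψ).sum
      = ∑ n ∈ Icc 1 k, (-1) ^ (k - n) * k.choose n * ψ n := by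
  set F : List ℕ → ℝ := fun L => -(k ! * blocksWeight L) / L.length * ψ L.headI
  calc ∑ c : Composition k, cumulantCoeff c * (c.blocks.map ψ).sum
      = ∑ c : Composition k, ∑ i : Fin c.length, F (c.blocks.rotate i) := by
        refine sum_congr rfl fun c _ => ?_
        rw [← Fin.sum_univ_fun_getElem, mul_sum]
        refine sum_congr rfl fun i _ => ?_
        simp only [F, blocksWeight_rotate, List.length_rotate, List.headI_rotate i.isLt,
          cumulantCoeff_eq hk, Composition.blocks_length]
    _ = ∑ c : Composition k, c.length • F c.blocks := Composition.sum_sum_rotate F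
    _ = ∑ c : Composition k, -(k ! * blocksWeight c.blocks) * ψ c.blocks.headI := by
        refine sum_congr rfl fun c _ => ?_
        have : (c.length : ℝ) ≠ 0 := by exact_mod_cast (c.length_pos_of_pos hk).ne'
        simp only [F, nsmul_eq_mul, Composition.blocks_length]
        field_simp
    _ = ∑ n ∈ Icc 1 k, k ! / n ! * ψ n * ∑ c : Composition (k - n), blocksWeight c.blocks := by
        rw [Composition.sum_eq_sum_Icc_sum_cons hk fun L => -(k ! * blocksWeight L) * ψ L.headI]
        simp_rw [blocksWeight_cons, mul_sum, List.headI_cons]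
        refine sum_congr rfl fun n _ => sum_congr rfl fun c _ => ?_
        ring
    _ = ∑ n ∈ Icc 1 k, (-1) ^ (k - n) * k.choose n * ψ n := by
        refine sum_congr rfl fun n hn => ?_
        rw [sum_blocksWeight, Nat.cast_choose ℝ (mem_Icc.1 hn).2]
        field_simp

theorem sum_cumulantCoeff_mul_sum_descFactorial {k j : ℕ} (hj : 0 < j) (hjk : j < k) :
    ∑ c : Composition k, cumulantCoeff c * (c.blocks.map fun b => (b.descFactorial j : ℝ)).sum
      = 0 := by
  rw [sum_cumulantCoeff_mul_sum_map (by omega)]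
  have := sum_range_neg_one_pow_mul_choose_mul_eval (P := descPochhammer ℝ j)
    (by rwa [descPochhammer_natDegree])
  rw [sum_range_succ_eq_add_sum_Icc] at this
  simpa [descPochhammer_eval_eq_descFactorial, descPochhammer_eval_zero, hj.ne'] using this

section

variable {𝕜 ι E F : Type*} [NontriviallyNormedField 𝕜] [Fintype ι] [DecidableEq ι]
  [NormedAddCommGroup E] [NormedSpace 𝕜 E] [NormedAddCommGroup F] [NormedSpace 𝕜 F]

theorem fderiv_comp_update_apply {Φ : (ι → E) → F} {x : ι → E} {i : ι} {w : E}
    (hΦ : DifferentiableAt 𝕜 Φ (Function.update x i w)) (u : E) :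
    fderiv 𝕜 (Φ ∘ Function.update x i) w u
      = fderiv 𝕜 Φ (Function.update x i w) (Pi.single i u) := by
  rw [fderiv_comp w hΦ (hasFDerivAt_update x w).differentiableAt, fderiv_update]
  simp only [ContinuousLinearMap.comp_apply]
  congr 1
  funext j
  rcases eq_or_ne j i with rfl | hj <;> simp [*]

theorem differentiable_fderiv_apply {G : E → F} (hG : ContDiff 𝕜 2 G) (v : E) :
    Differentiable 𝕜 fun z => fderiv 𝕜 G z v :=
  ((hG.fderiv_right (m := 1) (by norm_num)).differentiable (by norm_num)).clm_apply
    (differentiable_const v)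

theorem fderiv_fderiv_apply_single {G : (ι → E) → F} (hG : ContDiff 𝕜 2 G) (x : ι → E) (i : ι)
    (u v : E) :
    fderiv 𝕜 (fun z => fderiv 𝕜 G z (Pi.single i v)) x (Pi.single i u)
      = fderiv 𝕜 (fun w => fderiv 𝕜 (G ∘ Function.update x i) w v) (x i) u := by
  have hfirst : (fun w => fderiv 𝕜 (G ∘ Function.update x i) w v)
      = (fun z => fderiv 𝕜 G z (Pi.single i v)) ∘ Function.update x i :=
    funext fun w => fderiv_comp_update_apply (hG.differentiable (by norm_num) _) v
  rw [hfirst, fderiv_comp_update_apply (differentiable_fderiv_apply hG _ _),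
    Function.update_eq_self]

theorem fderiv_fderiv_comp_apply {g : 𝕜 → 𝕜} (hg : ContDiff 𝕜 2 g) {f : E → 𝕜}
    (hf : ContDiff 𝕜 2 f) (z u v : E) :
    fderiv 𝕜 (fun w => fderiv 𝕜 (g ∘ f) w v) z u
      = deriv (deriv g) (f z) * fderiv 𝕜 f z u * fderiv 𝕜 f z v
        + deriv g (f z) * fderiv 𝕜 (fun w => fderiv 𝕜 f w v) z u := by
  have hg' : ContDiff 𝕜 1 (deriv g) := (contDiff_succ_iff_deriv.1 hg).2.2
  have hf' : Differentiable 𝕜 f := hf.differentiable (by norm_num)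
  have hfirst : (fun w => fderiv 𝕜 (g ∘ f) w v) = fun w => deriv g (f w) * fderiv 𝕜 f w v :=
    funext fun w => by
      rw [((hg.differentiable (by norm_num) (f w)).hasDerivAt.comp_hasFDerivAt w
        (hf' w).hasFDerivAt).fderiv]
      simp
  have hprod := ((hg'.differentiable one_ne_zero (f z)).hasDerivAt.comp_hasFDerivAt z
    (hf' z).hasFDerivAt).fun_mul (differentiable_fderiv_apply hf v z).hasFDerivAt
  simp only [Function.comp_apply] at hprod
  rw [hfirst, hprod.fderiv]
  simp only [add_apply, smul_apply, smul_eq_mul]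
  ring

theorem Polynomial.contDiff_eval (p : 𝕜[X]) (n : WithTop ℕ∞) : ContDiff 𝕜 n fun x => p.eval x := by
  simpa [aeval_def, eval₂_eq_eval_map] using p.contDiff_aeval (𝕜 := 𝕜) n

end

theorem contDiff_cumulantG {f : ℂ → ℝ} {n : WithTop ℕ∞} (hf : ContDiff ℝ n f) (k : ℕ) :
    ContDiff ℝ n (cumulantG f k) :=
  ContDiff.sum fun _ _ => contDiff_const.mul <| contDiff_prod fun _ _ =>
    (hf.comp (contDiff_apply ℝ ℂ _)).pow _

-- `c.blocks.getD r 0` is the `r`-th block of `c`, or `0` when `c` has at most `r` blocks.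
noncomputable def slotPoly (k r : ℕ) (a : ℝ) : ℝ[X] :=
  ∑ c : Composition k, C (cumulantCoeff c * a ^ (k - c.blocks.getD r 0)) * X ^ c.blocks.getD r 0

theorem cumulantG_comp_update (f : ℂ → ℝ) (k : ℕ) (r : Fin k) (z0 : ℂ) :
    cumulantG f k ∘ Function.update (fun _ => z0) r
      = (fun y => (slotPoly k r (f z0)).eval y) ∘ f := by
  funext w
  have hfw (j : Fin k) :
      f (Function.update (fun _ => z0) r w j) = Function.update (fun _ => f z0) r (f w) j := by
    rcases eq_or_ne j r with rfl | hj <;> simp [*]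
  simp only [Function.comp_apply, cumulantG, slotPoly, eval_finsetSum, hfw,
    Composition.prod_update_castLE_pow]
  refine sum_congr rfl fun c _ => ?_
  simp only [cumulantCoeff, map_mul, map_pow, eval_mul, eval_C, eval_pow, eval_X]
  ring

theorem eval_iterate_derivative_slotPoly (k r j : ℕ) (a : ℝ) :
    (derivative^[j] (slotPoly k r a)).eval a
      = a ^ (k - j)
        * ∑ c : Composition k, cumulantCoeff c * (c.blocks.getD r 0).descFactorial j := by
  simp only [slotPoly, iterate_derivative_sum, iterate_derivative_C_mul,
    iterate_derivative_X_pow_eq_C_mul, eval_finsetSum, eval_mul, eval_C, eval_pow, eval_X, mul_sum]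
  refine sum_congr rfl fun c _ => ?_
  have := descFactorial_mul_pow_mul_pow (c.getD_blocks_le r) j a
  linear_combination cumulantCoeff c * this

theorem sum_eval_iterate_derivative_slotPoly {k j : ℕ} (hj : 0 < j) (hjk : j < k) (a : ℝ) :
    ∑ r : Fin k, (derivative^[j] (slotPoly k r a)).eval a = 0 := by
  have hslots (c : Composition k) :
      ∑ r : Fin k, cumulantCoeff c * (c.blocks.getD r 0).descFactorial j
        = cumulantCoeff c * (c.blocks.map fun b => (b.descFactorial j : ℝ)).sum := by
    rw [← mul_sum, List.sum_fin_getD_of_length_le (ψ := fun b => (b.descFactorial j : ℝ))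
      c.length_le (by simp [Nat.descFactorial_of_lt hj])]
  simp_rw [eval_iterate_derivative_slotPoly, ← mul_sum]
  rw [sum_comm]
  simp_rw [hslots, sum_cumulantCoeff_mul_sum_descFactorial hj hjk, mul_zero]

/-- for `f` of class `C²`, `k ≥ 3`, `z_0 ∈ ℂ` and `m, l ∈ {1,2}`,
`Σ_{r=1}^k (∂_{r m} ∂_{r l} G_k)(z_0,…,z_0) = 0`. -/
theorem cumulantG_diag_second_deriv_diagonal_sum (f : ℂ → ℝ) (hf : ContDiff ℝ 2 f)
    (k : ℕ) (hk : 3 ≤ k) (z0 : ℂ) (m l : Fin 2) :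
    ∑ r : Fin k,
      fderiv ℝ (fun z => fderiv ℝ (cumulantG f k) z (coordDir k r l))
        (fun _ => z0) (coordDir k r m) = 0 := by
  simp only [coordDir]
  generalize (if m = 0 then 1 else Complex.I : ℂ) = u
  generalize (if l = 0 then 1 else Complex.I : ℂ) = v
  have hderiv (p : ℝ[X]) : deriv (fun y => p.eval y) = fun y => p.derivative.eval y :=
    funext fun _ => p.deriv
  have hslot (r : Fin k) :
      fderiv ℝ (fun z => fderiv ℝ (cumulantG f k) z (Pi.single r v)) (fun _ => z0) (Pi.single r u)
        = (derivative^[2] (slotPoly k r (f z0))).eval (f z0) * fderiv ℝ f z0 u * fderiv ℝ f z0 v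
          + (derivative^[1] (slotPoly k r (f z0))).eval (f z0)
            * fderiv ℝ (fun w => fderiv ℝ f w v) z0 u := by
    rw [fderiv_fderiv_apply_single (contDiff_cumulantG hf k), cumulantG_comp_update,
      fderiv_fderiv_comp_apply (Polynomial.contDiff_eval _ 2) hf,
      hderiv, hderiv]
    rfl
  simp_rw [hslot, sum_add_distrib, ← sum_mul,
    sum_eval_iterate_derivative_slotPoly two_pos (by omega : 2 < k),
    sum_eval_iterate_derivative_slotPoly one_pos (by omega : 1 < k)]
  simp
end
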